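/- Let 1 < q < ∞, let G ⊂ ℝ² be measurable, and let h: G → ℝ² be differentiable a.e. on G with J_h > 0 a.e., distortion K_h ∈ L^q(G), and satisfying the change-of-variables inequality ∫_G F(h(z)) J_h(z) dz ≤ ∫_{h(G)} F(w) dw for nonnegative measurable F. Then for every measurable V: h(G) → [0,∞) with V ∈ L²(h(G)): ∫_G V(h(z))^{2q/(q+1)} |Dh(z)|^{2q/(q+1)} dz ≤ (∫_{h(G)} V(w)² dw)^{q/(q+1)} · (∫_G K_h(z)^q dz)^{1/(q+1)}. -/

import Mathlib

open MeasureTheory Metric Set ENNReal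
noncomputable section

/-- The Euclidean plane. -/
abbrev E2 := EuclideanSpace ℝ (Fin 2)

/-- `g` is a weak gradient of `u` on the set `Ω`, in the sense of integration by parts
against smooth compactly supported test functions. -/
def HasWeakGradOn (u : E2 → ℝ) (g : E2 → E2) (Ω : Set E2) : Prop :=
  ∀ φ : E2 → ℝ, ContDiff ℝ (⊤ : ℕ∞) φ → HasCompactSupport φ → tsupport φ ⊆ Ω →
    ∀ v : E2, ∫ x in Ω, u x * fderiv ℝ φ x v = - ∫ x in Ω, φ x * (inner ℝ (g x) v : ℝ)

/-- `Ω ⊆ ℝ²` is a Sobolev `(p,q)`-extension domain: every `u ∈ W^{1,p}(Ω)` has an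
extension to `ℝ²` lying in `W^{1,q}(ℝ²)`, with norm control. -/
def IsSobExtDomain (p q : ℝ≥0∞) (Ω : Set E2) : Prop :=
  ∃ C : ℝ≥0∞, 0 < C ∧ C ≠ ⊤ ∧ ∀ u g, HasWeakGradOn u g Ω →
    MemLp u p (volume.restrict Ω) → MemLp g p (volume.restrict Ω) →
    ∃ v gv, (∀ᵐ z ∂volume.restrict Ω, v z = u z) ∧ HasWeakGradOn v gv univ ∧
      MemLp v q volume ∧ MemLp gv q volume ∧
      eLpNorm v q volume + eLpNorm gv q volume ≤
        C * (eLpNorm u p (volume.restrict Ω) + eLpNorm g p (volume.restrict Ω))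

/-- `Ω ⊆ ℝ²` is a homogeneous Sobolev `(p,q)`-extension domain: every
`u ∈ Ẇ^{1,p}(Ω)` has an extension to `ℝ²` lying in `Ẇ^{1,q}(ℝ²)`, with control of the
gradient norm. -/
def IsHomSobExtDomain (p q : ℝ≥0∞) (Ω : Set E2) : Prop :=
  ∃ C : ℝ≥0∞, 0 < C ∧ C ≠ ⊤ ∧ ∀ u g, LocallyIntegrableOn u Ω → HasWeakGradOn u g Ω →
    MemLp g p (volume.restrict Ω) →
    ∃ v gv, (∀ᵐ z ∂volume.restrict Ω, v z = u z) ∧ HasWeakGradOn v gv univ ∧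
      MemLp gv q volume ∧
      eLpNorm gv q volume ≤ C * eLpNorm g p (volume.restrict Ω)

/-- The Jacobian determinant of a continuous linear map on the plane. -/
def JDet (T : E2 →L[ℝ] E2) : ℝ := LinearMap.det (T : E2 →ₗ[ℝ] E2)

/-- Hölder-type transfer estimate (Step 3 of the extension proof): if `h` is
a.e. differentiable on `G` with a.e. positive Jacobian, distortion in `L^q(G)`, and the
change of variables inequality holds, then for nonnegative `V ∈ L²(h(G))`,
`∫_G V(h z)^{2q/(q+1)} |Dh z|^{2q/(q+1)} ≤ (∫_{h(G)} V²)^{q/(q+1)} (∫_G K_h^q)^{1/(q+1)}`. -/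
theorem stmt5 (q : ℝ) (hq : 1 < q)
    (G : Set E2) (hG : MeasurableSet G)
    (h : E2 → E2) (Dh : E2 → (E2 →L[ℝ] E2))
    (hdiff : ∀ᵐ z ∂volume.restrict G, HasFDerivAt h (Dh z) z ∧ 0 < JDet (Dh z))
    (hcov : ∀ F : E2 → ℝ≥0∞, Measurable F →
      ∫⁻ z in G, F (h z) * ENNReal.ofReal (JDet (Dh z)) ≤ ∫⁻ w in h '' G, F w)
    (hKq : MemLp (fun z => ‖Dh z‖ ^ 2 / JDet (Dh z)) (ENNReal.ofReal q) (volume.restrict G))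
    (V : E2 → ℝ) (hV0 : ∀ w, 0 ≤ V w) (hVmeas : Measurable V)
    (hV2 : MemLp V 2 (volume.restrict (h '' G))) :
    ∫⁻ z in G, ENNReal.ofReal (V (h z) ^ (2 * q / (q + 1)) * ‖Dh z‖ ^ (2 * q / (q + 1))) ≤
      (∫⁻ w in h '' G, ENNReal.ofReal (V w ^ 2)) ^ (q / (q + 1)) *
        (∫⁻ z in G, ENNReal.ofReal ((‖Dh z‖ ^ 2 / JDet (Dh z)) ^ q)) ^ (1 / (q + 1)) := by
  have hq1 : (0:ℝ) < q + 1 := by linarith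
  have hq0 : (0:ℝ) < q := by linarith
  have ha0 : (0:ℝ) ≤ q / (q + 1) := by positivity
  have hb0 : (0:ℝ) ≤ 1 / (q + 1) := by positivity
  set μ := volume.restrict G with hμ
  -- measurability of Dh
  have hDh : AEMeasurable Dh μ := by
    refine (measurable_fderiv ℝ h).aemeasurable.congr ?_
    filter_upwards [hdiff] with z hz using hz.1.fderiv
  have hJ : AEMeasurable (fun z => JDet (Dh z)) μ :=
    (ContinuousLinearMap.continuous_det.measurable.comp_aemeasurable hDh :)
  have hN : AEMeasurable (fun z => ‖Dh z‖) μ := hDh.norm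
  -- measurability of h
  have hhm : AEMeasurable h μ := by
    have hD : MeasurableSet {z : E2 | DifferentiableAt ℝ h z} :=
      measurableSet_of_differentiableAt ℝ h
    have hcont : ContinuousOn h {z : E2 | DifferentiableAt ℝ h z} := fun z hz =>
      hz.continuousAt.continuousWithinAt
    have h1 : AEMeasurable h (volume.restrict ({z : E2 | DifferentiableAt ℝ h z} ∩ G)) :=
      (hcont.aemeasurable hD).mono_measure
        (Measure.restrict_mono inter_subset_left le_rfl)
    have h2 : ({z : E2 | DifferentiableAt ℝ h z} ∩ G : Set E2) =ᵐ[volume] G := by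
      rw [Filter.eventuallyEq_set]
      have h3 := (ae_restrict_iff' hG).mp
        (hdiff.mono fun z hz => hz.1.differentiableAt)
      filter_upwards [h3] with z hz
      exact ⟨fun hm => hm.2, fun hzG => ⟨hz hzG, hzG⟩⟩
    rw [hμ, ← Measure.restrict_congr_set h2]
    exact h1
  have hVh : AEMeasurable (fun z => V (h z)) μ := hVmeas.comp_aemeasurable hhm
  -- conjugate exponents
  have hpq : ((q+1)/q).HolderConjugate (q+1) := by
    rw [Real.holderConjugate_iff]
    constructor
    · rw [lt_div_iff₀ hq0]; linarith
    · field_simp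
  set f : E2 → ℝ≥0∞ := fun z => ENNReal.ofReal (V (h z) ^ 2 * JDet (Dh z)) ^ (q / (q + 1))
    with hf
  set g : E2 → ℝ≥0∞ := fun z =>
      ENNReal.ofReal ((‖Dh z‖ ^ 2 / JDet (Dh z)) ^ q) ^ (1 / (q + 1)) with hg
  have hfm : AEMeasurable f μ :=
    ((ENNReal.measurable_ofReal.comp_aemeasurable
      (((hVh.pow_const 2)).mul hJ)).pow_const _)
  have hgm : AEMeasurable g μ := by
    refine AEMeasurable.pow_const ?_ _
    exact ENNReal.measurable_ofReal.comp_aemeasurable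
      ((Real.continuous_rpow_const hq0.le).measurable.comp_aemeasurable
        ((hN.pow_const 2).div hJ))
  -- pointwise identity a.e.
  have hpt : ∀ᵐ z ∂μ,
      ENNReal.ofReal (V (h z) ^ (2 * q / (q + 1)) * ‖Dh z‖ ^ (2 * q / (q + 1)))
        = f z * g z := by
    filter_upwards [hdiff] with z hz
    have hJz : 0 < JDet (Dh z) := hz.2
    set v := V (h z) with hv
    set n := ‖Dh z‖ with hn
    have hv0 : 0 ≤ v := hV0 _
    have hn0 : 0 ≤ n := norm_nonneg _
    have hK0 : 0 ≤ n ^ 2 / JDet (Dh z) := by positivity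
    have key : v ^ (2 * q / (q + 1)) * n ^ (2 * q / (q + 1))
        = (v ^ 2 * JDet (Dh z)) ^ (q / (q + 1))
          * ((n ^ 2 / JDet (Dh z)) ^ q) ^ (1 / (q + 1)) := by
      rw [← Real.mul_rpow hv0 hn0, ← Real.rpow_mul hK0]
      have e1 : q * (1 / (q + 1)) = q / (q + 1) := by ring
      rw [e1, ← Real.mul_rpow (by positivity) hK0]
      have e2 : v ^ 2 * JDet (Dh z) * (n ^ 2 / JDet (Dh z)) = (v * n) ^ 2 := by
        field_simp
      rw [e2, ← Real.rpow_natCast (v * n) 2, ← Real.rpow_mul (by positivity)]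
      congr 1
      push_cast
      ring
    rw [key]
    show ENNReal.ofReal ((v ^ 2 * JDet (Dh z)) ^ (q / (q + 1))
        * ((n ^ 2 / JDet (Dh z)) ^ q) ^ (1 / (q + 1)))
      = ENNReal.ofReal (v ^ 2 * JDet (Dh z)) ^ (q / (q + 1))
        * ENNReal.ofReal ((n ^ 2 / JDet (Dh z)) ^ q) ^ (1 / (q + 1))
    rw [ENNReal.ofReal_rpow_of_nonneg (mul_nonneg (sq_nonneg _) hJz.le) ha0,
      ENNReal.ofReal_rpow_of_nonneg (Real.rpow_nonneg hK0 q) hb0,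
      ← ENNReal.ofReal_mul (Real.rpow_nonneg (mul_nonneg (sq_nonneg _) hJz.le) _)]
  rw [lintegral_congr_ae hpt]
  have hHold := ENNReal.lintegral_mul_le_Lp_mul_Lq μ hpq hfm hgm
  refine le_trans hHold ?_
  -- simplify the two factors
  have hfp : ∀ z, f z ^ ((q+1)/q) = ENNReal.ofReal (V (h z) ^ 2 * JDet (Dh z)) := by
    intro z
    rw [hf, ← ENNReal.rpow_mul]
    rw [show q / (q + 1) * ((q+1)/q) = 1 by field_simp]
    exact ENNReal.rpow_one _
  have hgp : ∀ z, g z ^ (q+1) = ENNReal.ofReal ((‖Dh z‖ ^ 2 / JDet (Dh z)) ^ q) := by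
    intro z
    rw [hg, ← ENNReal.rpow_mul]
    rw [show 1 / (q + 1) * (q+1) = 1 by field_simp]
    exact ENNReal.rpow_one _
  simp only [hfp, hgp]
  rw [one_div_div]
  refine mul_le_mul_left (ENNReal.rpow_le_rpow ?_ ha0) _
  -- change of variables
  calc ∫⁻ z, ENNReal.ofReal (V (h z) ^ 2 * JDet (Dh z)) ∂μ
      = ∫⁻ z in G, ENNReal.ofReal (V (h z) ^ 2) * ENNReal.ofReal (JDet (Dh z)) := by
        rw [hμ]; exact lintegral_congr fun z => ENNReal.ofReal_mul (by positivity)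
    _ ≤ ∫⁻ w in h '' G, ENNReal.ofReal (V w ^ 2) := by
        exact hcov (fun w => ENNReal.ofReal (V w ^ 2))
          (ENNReal.measurable_ofReal.comp (hVmeas.pow_const 2))
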